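/- arXiv:1909.00469 — 7 statements merged into one kernel-verified Lean document; each statement's English description precedes it below -/
import Mathlib

section
/- Let r, s, t, u be nonzero real numbers. The set [C_f] of strongly almost convergent double sequences is a Banach space under the norm ‖y‖_{[C_f]} = sup_{q,q′,m,n ∈ ℕ} (1/((q+1)(q′+1))) Σ_{k=m}^{m+q} Σ_{l=n}^{n+q′} |y_{kl}|; that is, this supremum is finite for every y ∈ [C_f], it defines a norm on [C_f], and every sequence of elements of [C_f] that is Cauchy with respect to this norm converges in this norm to an element of [C_f]. -/
open Finset

noncomputable section

/-- The four-dimensional generalized difference matrix `B(r,s,t,u)` acting on a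
double sequence `x : ℕ × ℕ → ℂ`; terms with a negative index are taken to be `0`. -/
def Btrans (r s t u : ℝ) (x : ℕ × ℕ → ℂ) : ℕ × ℕ → ℂ := fun p =>
  (s * u : ℂ) * (if p.1 = 0 ∨ p.2 = 0 then 0 else x (p.1 - 1, p.2 - 1)) +
  (s * t : ℂ) * (if p.1 = 0 then 0 else x (p.1 - 1, p.2)) +
  (r * u : ℂ) * (if p.2 = 0 then 0 else x (p.1, p.2 - 1)) +
  (r * t : ℂ) * x p

/-- `x` is strongly almost convergent to `L` ("[f2]-lim x = L"). -/
def StronglyAlmostConvTo (x : ℕ × ℕ → ℂ) (L : ℂ) : Prop :=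
  ∀ ε > (0 : ℝ), ∃ Q : ℕ, ∀ q q' : ℕ, Q ≤ q → Q ≤ q' → ∀ m n : ℕ,
    (1 / (((q : ℝ) + 1) * ((q' : ℝ) + 1))) *
      ∑ k ∈ Finset.range (q + 1), ∑ l ∈ Finset.range (q' + 1),
        ‖x (m + k, n + l) - L‖ < ε

/-- `x` is almost convergent to `L` ("f2-lim x = L"). -/
def AlmostConvTo (x : ℕ × ℕ → ℂ) (L : ℂ) : Prop :=
  ∀ ε > (0 : ℝ), ∃ Q : ℕ, ∀ q q' : ℕ, Q ≤ q → Q ≤ q' → ∀ m n : ℕ,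
    ‖(1 / (((q : ℂ) + 1) * ((q' : ℂ) + 1))) *
      (∑ k ∈ Finset.range (q + 1), ∑ l ∈ Finset.range (q' + 1), x (m + k, n + l)) - L‖ < ε

/-- The set of values whose supremum is the `[C_f]`-norm of `y`. -/
def CfNormSet (y : ℕ × ℕ → ℂ) : Set ℝ :=
  {v | ∃ q q' m n : ℕ, v = (1 / (((q : ℝ) + 1) * ((q' : ℝ) + 1))) *
    ∑ k ∈ Finset.range (q + 1), ∑ l ∈ Finset.range (q' + 1), ‖y (m + k, n + l)‖}

/-- The `[C_f]`-norm. -/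
def CfNorm (y : ℕ × ℕ → ℂ) : ℝ := sSup (CfNormSet y)

/-- The formal inverse transform of `B(r,s,t,u)`. -/
def Binv (r s t u : ℝ) (y : ℕ × ℕ → ℂ) : ℕ × ℕ → ℂ := fun p =>
  (1 / (r * t : ℂ)) * ∑ k ∈ Finset.range (p.1 + 1), ∑ l ∈ Finset.range (p.2 + 1),
    ((-s : ℂ) / r) ^ (p.1 - k) * ((-u : ℂ) / t) ^ (p.2 - l) * y (k, l)

/-- Pringsheim convergence of a double sequence. -/
def PConvTo (s : ℕ × ℕ → ℂ) (S : ℂ) : Prop :=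
  ∀ ε > (0 : ℝ), ∃ N : ℕ, ∀ m n : ℕ, N ≤ m → N ≤ n → ‖s (m, n) - S‖ < ε

/-- Boundedness of a double sequence. -/
def Bdd2 (s : ℕ × ℕ → ℂ) : Prop := ∃ M : ℝ, ∀ m n : ℕ, ‖s (m, n)‖ ≤ M

/-- bp-convergence: bounded Pringsheim convergence. -/
def BPConvTo (s : ℕ × ℕ → ℂ) (S : ℂ) : Prop := Bdd2 s ∧ PConvTo s S

/-- Rectangular partial sums of a double series. -/
def PartialSums (c : ℕ × ℕ → ℂ) : ℕ × ℕ → ℂ := fun p =>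
  ∑ k ∈ Finset.range (p.1 + 1), ∑ l ∈ Finset.range (p.2 + 1), c (k, l)

/-- bp-convergence of the double series `Σ c_{kl}`. -/
def BPSeriesConv (c : ℕ × ℕ → ℂ) : Prop := ∃ S, BPConvTo (PartialSums c) S

/-- Pringsheim convergence of a real double sequence. -/
def PConvToR (s : ℕ × ℕ → ℝ) (S : ℝ) : Prop :=
  ∀ ε > (0 : ℝ), ∃ N : ℕ, ∀ m n : ℕ, N ≤ m → N ≤ n → |s (m, n) - S| < ε

/-- bp-convergence of a real double sequence. -/
def BPConvToR (s : ℕ × ℕ → ℝ) (S : ℝ) : Prop :=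
  (∃ M : ℝ, ∀ m n : ℕ, |s (m, n)| ≤ M) ∧ PConvToR s S

/-- The rectangle `{(j,k) : m ≤ j ≤ m+p-1, n ≤ k ≤ n+q-1}`. -/
def rectSet (m n p q : ℕ) : Set (ℕ × ℕ) :=
  {jk | m ≤ jk.1 ∧ jk.1 ≤ m + p - 1 ∧ n ≤ jk.2 ∧ jk.2 ≤ n + q - 1}

/-- `E` is uniformly of zero density. -/
def UnifZeroDensity (E : Set (ℕ × ℕ)) : Prop :=
  ∀ ε > (0 : ℝ), ∃ P : ℕ, ∀ p q : ℕ, P ≤ p → P ≤ q → ∀ m n : ℕ,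
    ((E ∩ rectSet m n p q).ncard : ℝ) ≤ ε * p * q

/-- The inner sums `Σ_{j=k}^{m} Σ_{i=l}^{n} (−s/r)^{j−k} (−u/t)^{i−l} a_{ji}`. -/
def innerS (r s t u : ℝ) (a : ℕ × ℕ → ℂ) (k l m n : ℕ) : ℂ :=
  ∑ j ∈ Finset.Icc k m, ∑ i ∈ Finset.Icc l n,
    ((-s : ℂ) / r) ^ (j - k) * ((-u : ℂ) / t) ^ (i - l) * a (j, i)

/-- The matrix `d_{mnkl}(a)` (taken to be `0` when `k > m` or `l > n`). -/
def dmat (r s t u : ℝ) (a : ℕ × ℕ → ℂ) (m n k l : ℕ) : ℂ :=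
  innerS r s t u a k l m n / (r * t : ℂ)

/-- The double difference `Δ₁₁ a_{mnkl}`. -/
def Delta11 (A : ℕ × ℕ → ℕ × ℕ → ℂ) (m n k l : ℕ) : ℂ :=
  A (m, n) (k, l) - A (m, n) (k + 1, l) - A (m, n) (k, l + 1) + A (m, n) (k + 1, l + 1)

/-- The matrix `e_{mnkl}` associated with a four-dimensional matrix `A`
(taken to be `0` when `k > m` or `l > n`). -/
def emat (r s t u : ℝ) (A : ℕ × ℕ → ℕ × ℕ → ℂ) (m n k l : ℕ) : ℂ :=
  ∑ i ∈ Finset.Icc k m, ∑ j ∈ Finset.Icc l n,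
    ((-s : ℂ) / r) ^ (i - k) * ((-u : ℂ) / t) ^ (j - l) * A (m, n) (i, j) / (r * t : ℂ)

/-- `Δ₁₁` applied to the `e`-matrix. -/
def Delta11e (r s t u : ℝ) (A : ℕ × ℕ → ℕ × ℕ → ℂ) (m n k l : ℕ) : ℂ :=
  emat r s t u A m n k l - emat r s t u A m n (k + 1) l -
    emat r s t u A m n k (l + 1) + emat r s t u A m n (k + 1) (l + 1)

end

/-! The `[C_f]`-norm is the sup norm: `‖y_{mn}‖` is the average over the `1 × 1` block at
`(m, n)`, and every block average is at most `sup ‖y‖`. Strongly almost convergent sequences are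
bounded, so `[C_f]` sits isometrically in `ℓ^∞(ℕ × ℕ, ℂ)`, which gives the norm axioms and
completeness once `[C_f]` is shown to be closed under uniform limits. For that, the limits `L_i`
of a uniformly convergent sequence `F_i` form a Cauchy sequence because `‖L - M‖ ≤ sup ‖x - z‖`
whenever `x → L` and `z → M` strongly almost, and the uniform limit converges strongly almost to
`lim L_i` by a 3ε-argument. -/

open scoped lp ENNReal

/-- The averages in `StronglyAlmostConvTo` and `CfNormSet` are `rectAvg` unfolded. -/
noncomputable def rectAvg (g : ℕ × ℕ → ℝ) (q q' m n : ℕ) : ℝ :=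
  (1 / (((q : ℝ) + 1) * ((q' : ℝ) + 1))) *
    ∑ k ∈ range (q + 1), ∑ l ∈ range (q' + 1), g (m + k, n + l)

section rectAvg

variable {g h : ℕ × ℕ → ℝ} (q q' m n : ℕ)

lemma rectAvg_const (c : ℝ) : rectAvg (fun _ => c) q q' m n = c := by
  simp only [rectAvg, sum_const, card_range, nsmul_eq_mul]
  push_cast
  field_simp

lemma rectAvg_add :
    rectAvg (fun p => g p + h p) q q' m n = rectAvg g q q' m n + rectAvg h q q' m n := by
  simp only [rectAvg, sum_add_distrib, mul_add]

variable {q q' m n}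

lemma rectAvg_mono (hgh : ∀ p, g p ≤ h p) : rectAvg g q q' m n ≤ rectAvg h q q' m n := by
  unfold rectAvg
  gcongr with k _ l _
  exact hgh _

lemma rectAvg_le {C : ℝ} (hg : ∀ p, g p ≤ C) : rectAvg g q q' m n ≤ C :=
  (rectAvg_mono hg).trans_eq (rectAvg_const q q' m n C)

lemma rectAvg_zero_zero : rectAvg g 0 0 m n = g (m, n) := by
  simp [rectAvg]

lemma le_mul_rectAvg (hg : ∀ p, 0 ≤ g p) :
    g (m, n) ≤ ((q : ℝ) + 1) * ((q' : ℝ) + 1) * rectAvg g q q' m n := by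
  rw [rectAvg, ← mul_assoc, mul_one_div_cancel (by positivity), one_mul]
  have h0 (r : ℕ) : 0 ∈ range (r + 1) := mem_range.2 r.succ_pos
  calc g (m, n) = g (m + 0, n + 0) := rfl
    _ ≤ ∑ l ∈ range (q' + 1), g (m + 0, n + l) :=
      single_le_sum (f := fun l => g (m + 0, n + l)) (fun _ _ => hg _) (h0 q')
    _ ≤ ∑ k ∈ range (q + 1), ∑ l ∈ range (q' + 1), g (m + k, n + l) :=
      single_le_sum (f := fun k => ∑ l ∈ range (q' + 1), g (m + k, n + l))
        (fun _ _ => sum_nonneg fun _ _ => hg _) (h0 q)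

end rectAvg

namespace StronglyAlmostConvTo

variable {x z : ℕ × ℕ → ℂ} {L M : ℂ}

theorem bddAbove_range_norm (hx : StronglyAlmostConvTo x L) :
    BddAbove (Set.range fun p => ‖x p‖) := by
  obtain ⟨Q, hQ⟩ := hx 1 one_pos
  refine ⟨((Q : ℝ) + 1) * ((Q : ℝ) + 1) + ‖L‖, ?_⟩
  rintro _ ⟨⟨m, n⟩, rfl⟩
  have hmn : ‖x (m, n) - L‖ ≤ ((Q : ℝ) + 1) * ((Q : ℝ) + 1) :=
    (le_mul_rectAvg (q := Q) (q' := Q) fun p => norm_nonneg (x p - L)).trans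
      (mul_le_of_le_one_right (by positivity) (hQ Q Q le_rfl le_rfl m n).le)
  linarith [norm_le_norm_add_norm_sub' (x (m, n)) L]

theorem memℓp_infty (hx : StronglyAlmostConvTo x L) : Memℓp x ∞ :=
  memℓp_infty_iff.2 hx.bddAbove_range_norm

theorem norm_sub_le {C : ℝ} (hx : StronglyAlmostConvTo x L) (hz : StronglyAlmostConvTo z M)
    (hxz : ∀ p, ‖x p - z p‖ ≤ C) : ‖L - M‖ ≤ C := by
  refine le_of_forall_pos_lt_add fun ε hε => ?_
  obtain ⟨Qx, hQx⟩ := hx (ε / 2) (by positivity)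
  obtain ⟨Qz, hQz⟩ := hz (ε / 2) (by positivity)
  set Q := max Qx Qz
  have hx' : rectAvg (fun p => ‖x p - L‖) Q Q 0 0 < ε / 2 :=
    hQx Q Q (le_max_left _ _) (le_max_left _ _) 0 0
  have hz' : rectAvg (fun p => ‖z p - M‖) Q Q 0 0 < ε / 2 :=
    hQz Q Q (le_max_right _ _) (le_max_right _ _) 0 0
  calc ‖L - M‖ = rectAvg (fun _ => ‖L - M‖) Q Q 0 0 := (rectAvg_const _ _ _ _ _).symm
    _ ≤ rectAvg (fun p => ‖x p - L‖ + ‖z p - M‖ + C) Q Q 0 0 := rectAvg_mono fun p => by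
      linarith [norm_sub_le_norm_sub_add_norm_sub L (x p) M, norm_sub_rev L (x p),
        norm_sub_le_norm_sub_add_norm_sub (x p) (z p) M, hxz p]
    _ = rectAvg (fun p => ‖x p - L‖) Q Q 0 0 + rectAvg (fun p => ‖z p - M‖) Q Q 0 0 + C := by
      rw [rectAvg_add, rectAvg_add, rectAvg_const]
    _ < C + ε := by linarith

end StronglyAlmostConvTo

theorem exists_stronglyAlmostConvTo_of_tendstoUniformly {F : ℕ → ℕ × ℕ → ℂ} {L : ℕ → ℂ}
    {y : ℕ × ℕ → ℂ} (hF : ∀ i, StronglyAlmostConvTo (F i) (L i))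
    (hy : TendstoUniformly F y Filter.atTop) : ∃ L, StronglyAlmostConvTo y L := by
  rw [Metric.tendstoUniformly_iff] at hy
  have hL : CauchySeq L := Metric.cauchySeq_iff'.2 fun ε hε => by
    obtain ⟨N, hN⟩ := Filter.eventually_atTop.1 (hy (ε / 3) (by positivity))
    refine ⟨N, fun n hn => ?_⟩
    rw [dist_eq_norm]
    refine ((hF n).norm_sub_le (hF N) (C := ε / 3 + ε / 3) fun p => ?_).trans_lt (by linarith)
    have := dist_triangle_left (F n p) (F N p) (y p)
    rw [dist_eq_norm] at this
    linarith [hN n hn p, hN N le_rfl p]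
  obtain ⟨L₀, hL₀⟩ := cauchySeq_tendsto_of_complete hL
  refine ⟨L₀, fun ε hε => ?_⟩
  obtain ⟨i, hyi, hLi⟩ :=
    ((hy (ε / 3) (by positivity)).and (Metric.tendsto_nhds.1 hL₀ (ε / 3) (by positivity))).exists
  obtain ⟨Q, hQ⟩ := hF i (ε / 3) (by positivity)
  refine ⟨Q, fun q q' hq hq' m n => ?_⟩
  calc rectAvg (fun p => ‖y p - L₀‖) q q' m n
      ≤ rectAvg (fun p => ‖F i p - L i‖ + (ε / 3 + ε / 3)) q q' m n := rectAvg_mono fun p => by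
        linarith [norm_sub_le_norm_sub_add_norm_sub (y p) (F i p) L₀,
          norm_sub_le_norm_sub_add_norm_sub (F i p) (L i) L₀, hyi p, dist_eq_norm (y p) (F i p),
          dist_eq_norm (L i) L₀]
    _ < ε := by
      have hFi : rectAvg (fun p => ‖F i p - L i‖) q q' m n < ε / 3 := hQ q q' hq hq' m n
      rw [rectAvg_add, rectAvg_const]
      linarith

section CfNorm

variable {y : ℕ × ℕ → ℂ}

lemma bddAbove_CfNormSet (hy : BddAbove (Set.range fun p => ‖y p‖)) :
    BddAbove (CfNormSet y) := by
  obtain ⟨C, hC⟩ := hy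
  refine ⟨C, ?_⟩
  rintro _ ⟨q, q', m, n, rfl⟩
  exact rectAvg_le (g := fun p => ‖y p‖) fun p => hC ⟨p, rfl⟩

lemma CfNorm_nonneg (y : ℕ × ℕ → ℂ) : 0 ≤ CfNorm y := by
  refine Real.sSup_nonneg ?_
  rintro _ ⟨q, q', m, n, rfl⟩
  positivity

lemma CfNorm_eq_iSup (hy : BddAbove (Set.range fun p => ‖y p‖)) :
    CfNorm y = ⨆ p, ‖y p‖ := by
  refine le_antisymm (csSup_le ⟨_, 0, 0, 0, 0, rfl⟩ ?_) (ciSup_le fun p => ?_)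
  · rintro _ ⟨q, q', m, n, rfl⟩
    exact rectAvg_le (g := fun p => ‖y p‖) fun p => le_ciSup hy p
  · rw [← rectAvg_zero_zero (g := fun p => ‖y p‖)]
    exact le_csSup (bddAbove_CfNormSet hy) ⟨0, 0, p.1, p.2, rfl⟩

lemma CfNorm_eq_norm_lp (hy : Memℓp y ∞) : CfNorm y = ‖(⟨y, hy⟩ : ℓ^∞(ℕ × ℕ, ℂ))‖ :=
  CfNorm_eq_iSup (memℓp_infty_iff.1 hy)

lemma CfNorm_eq_zero_iff (hy : Memℓp y ∞) : CfNorm y = 0 ↔ y = 0 := by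
  rw [CfNorm_eq_norm_lp hy, norm_eq_zero, Subtype.ext_iff]
  rfl

lemma CfNorm_smul (c : ℂ) (hy : Memℓp y ∞) : CfNorm (c • y) = ‖c‖ * CfNorm y := by
  rw [CfNorm_eq_norm_lp hy, CfNorm_eq_norm_lp (hy.const_smul c)]
  exact norm_smul c (⟨y, hy⟩ : ℓ^∞(ℕ × ℕ, ℂ))

lemma CfNorm_add_le {z : ℕ × ℕ → ℂ} (hy : Memℓp y ∞) (hz : Memℓp z ∞) :
    CfNorm (y + z) ≤ CfNorm y + CfNorm z := by
  rw [CfNorm_eq_norm_lp hy, CfNorm_eq_norm_lp hz, CfNorm_eq_norm_lp (hy.add hz)]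
  exact norm_add_le (⟨y, hy⟩ : ℓ^∞(ℕ × ℕ, ℂ)) ⟨z, hz⟩

end CfNorm

theorem exists_stronglyAlmostConvTo_tendsto_CfNorm {F : ℕ → ℕ × ℕ → ℂ} {L : ℕ → ℂ}
    (hF : ∀ i, StronglyAlmostConvTo (F i) (L i))
    (hC : ∀ ε > (0 : ℝ), ∃ N : ℕ, ∀ i j : ℕ, N ≤ i → N ≤ j → CfNorm (F i - F j) < ε) :
    ∃ y : ℕ × ℕ → ℂ, (∃ L, StronglyAlmostConvTo y L) ∧
      ∀ ε > (0 : ℝ), ∃ N : ℕ, ∀ i : ℕ, N ≤ i → CfNorm (F i - y) < ε := by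
  let G (i : ℕ) : ℓ^∞(ℕ × ℕ, ℂ) := ⟨F i, (hF i).memℓp_infty⟩
  have hdist (i : ℕ) (g : ℓ^∞(ℕ × ℕ, ℂ)) : CfNorm (F i - g) = dist (G i) g := by
    rw [dist_eq_norm]
    exact CfNorm_eq_norm_lp (G i - g).2
  have hG : CauchySeq G := Metric.cauchySeq_iff.2 fun ε hε => by
    obtain ⟨N, hN⟩ := hC ε hε
    exact ⟨N, fun i hi j hj => (hdist i (G j)).symm.trans_lt (hN i j hi hj)⟩
  obtain ⟨g, hg⟩ := cauchySeq_tendsto_of_complete hG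
  refine ⟨g, exists_stronglyAlmostConvTo_of_tendstoUniformly hF ?_, fun ε hε => ?_⟩
  · refine Metric.tendstoUniformly_iff.2 fun ε hε => ?_
    filter_upwards [Metric.tendsto_nhds.1 hg ε hε] with i hi p
    rw [dist_eq_norm] at hi
    rw [dist_comm, dist_eq_norm]
    exact (lp.norm_apply_le_norm ENNReal.top_ne_zero (G i - g) p).trans_lt hi
  · simpa only [hdist] using Metric.tendsto_atTop.1 hg ε hε

theorem stmt0_general :
    -- the supremum is finite for every member of [C_f]
    (∀ y : ℕ × ℕ → ℂ, (∃ L, StronglyAlmostConvTo y L) → BddAbove (CfNormSet y)) ∧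
    -- norm axioms on [C_f]
    (∀ y : ℕ × ℕ → ℂ, (∃ L, StronglyAlmostConvTo y L) → (CfNorm y = 0 ↔ y = 0)) ∧
    (∀ y : ℕ × ℕ → ℂ, (∃ L, StronglyAlmostConvTo y L) → 0 ≤ CfNorm y) ∧
    (∀ (c : ℂ) (y : ℕ × ℕ → ℂ), (∃ L, StronglyAlmostConvTo y L) →
      CfNorm (c • y) = ‖c‖ * CfNorm y) ∧
    (∀ y z : ℕ × ℕ → ℂ, (∃ L, StronglyAlmostConvTo y L) → (∃ L, StronglyAlmostConvTo z L) →
      CfNorm (y + z) ≤ CfNorm y + CfNorm z) ∧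
    -- completeness: every Cauchy sequence in ([C_f], ‖·‖) converges in norm to a member of [C_f]
    (∀ F : ℕ → (ℕ × ℕ → ℂ), (∀ i, ∃ L, StronglyAlmostConvTo (F i) L) →
      (∀ ε > (0 : ℝ), ∃ N : ℕ, ∀ i j : ℕ, N ≤ i → N ≤ j → CfNorm (F i - F j) < ε) →
      ∃ y : ℕ × ℕ → ℂ, (∃ L, StronglyAlmostConvTo y L) ∧
        ∀ ε > (0 : ℝ), ∃ N : ℕ, ∀ i : ℕ, N ≤ i → CfNorm (F i - y) < ε) := by
  refine ⟨fun y ⟨_, hy⟩ => bddAbove_CfNormSet hy.bddAbove_range_norm,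
    fun y ⟨_, hy⟩ => CfNorm_eq_zero_iff hy.memℓp_infty, fun y _ => CfNorm_nonneg y,
    fun c y ⟨_, hy⟩ => CfNorm_smul c hy.memℓp_infty,
    fun y z ⟨_, hy⟩ ⟨_, hz⟩ => CfNorm_add_le hy.memℓp_infty hz.memℓp_infty, fun F hF => ?_⟩
  choose L hL using hF
  exact exists_stronglyAlmostConvTo_tendsto_CfNorm hL

/-- `[C_f]` is a Banach space under the norm
`‖y‖ = sup_{q,q',m,n} (1/((q+1)(q'+1))) Σ |y_{kl}|`. -/
theorem stmt0 (r s t u : ℝ) (hr : r ≠ 0) (hs : s ≠ 0) (ht : t ≠ 0) (hu : u ≠ 0) :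
    -- the supremum is finite for every member of [C_f]
    (∀ y : ℕ × ℕ → ℂ, (∃ L, StronglyAlmostConvTo y L) → BddAbove (CfNormSet y)) ∧
    -- norm axioms on [C_f]
    (∀ y : ℕ × ℕ → ℂ, (∃ L, StronglyAlmostConvTo y L) → (CfNorm y = 0 ↔ y = 0)) ∧
    (∀ y : ℕ × ℕ → ℂ, (∃ L, StronglyAlmostConvTo y L) → 0 ≤ CfNorm y) ∧
    (∀ (c : ℂ) (y : ℕ × ℕ → ℂ), (∃ L, StronglyAlmostConvTo y L) →
      CfNorm (c • y) = ‖c‖ * CfNorm y) ∧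
    (∀ y z : ℕ × ℕ → ℂ, (∃ L, StronglyAlmostConvTo y L) → (∃ L, StronglyAlmostConvTo z L) →
      CfNorm (y + z) ≤ CfNorm y + CfNorm z) ∧
    -- completeness: every Cauchy sequence in ([C_f], ‖·‖) converges in norm to a member of [C_f]
    (∀ F : ℕ → (ℕ × ℕ → ℂ), (∀ i, ∃ L, StronglyAlmostConvTo (F i) L) →
      (∀ ε > (0 : ℝ), ∃ N : ℕ, ∀ i j : ℕ, N ≤ i → N ≤ j → CfNorm (F i - F j) < ε) →
      ∃ y : ℕ × ℕ → ℂ, (∃ L, StronglyAlmostConvTo y L) ∧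
        ∀ ε > (0 : ℝ), ∃ N : ℕ, ∀ i : ℕ, N ≤ i → CfNorm (F i - y) < ε) :=
  stmt0_general
end

section
/- Let r, s, t, u be nonzero real numbers. For every double sequence y, the double sequence x defined by x_{mn} = (1/(rt)) Σ_{k=0}^{m} Σ_{l=0}^{n} (−s/r)^{m−k} (−u/t)^{n−l} y_{kl} satisfies (B(r,s,t,u)x)_{mn} = y_{mn} for all m, n ∈ ℕ; moreover x is the unique double sequence with Bx = y, so B(r,s,t,u) is a bijection of the set of all double sequences onto itself. -/
open Finset

/-!
`B(r,s,t,u)` is the tensor product of two one-dimensional generalized difference operators,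
`Δ(r,s) f_m = r f_m + s f_{m-1}` acting on the first index and `Δ(t,u)` on the second, and the
formula for `x` is the tensor product of their inverses `Δ(r,s)⁻¹ g_m = (1/r) Σ_k (-s/r)^{m-k} g_k`.
Each one-dimensional operator is lower triangular with diagonal `r ≠ 0` (resp. `t ≠ 0`), hence
injective, and the geometric sum is a right inverse of it by the recursion
`Δ(r,s)⁻¹ g_{m+1} = (-s/r) Δ(r,s)⁻¹ g_m + g_{m+1}/r`.
-/

section GenDiff

variable {K : Type*} [Field K] (r s : K)

def genDiff (f : ℕ → K) (m : ℕ) : K :=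
  r * f m + s * (if m = 0 then 0 else f (m - 1))

def genDiffInv (g : ℕ → K) (m : ℕ) : K :=
  (1 / r) * ∑ k ∈ range (m + 1), (-s / r) ^ (m - k) * g k

variable {r s}

theorem genDiffInv_succ (g : ℕ → K) (m : ℕ) :
    genDiffInv r s g (m + 1) = -s / r * genDiffInv r s g m + 1 / r * g (m + 1) := by
  rw [genDiffInv, genDiffInv, sum_range_succ, Nat.sub_self, pow_zero, one_mul, mul_add, mul_sum,
    mul_sum, mul_sum]
  congr 1
  refine sum_congr rfl fun k hk => ?_
  rw [Nat.succ_sub (Nat.le_of_lt_succ (mem_range.mp hk)), pow_succ]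
  ring

theorem genDiff_genDiffInv (hr : r ≠ 0) (g : ℕ → K) : genDiff r s (genDiffInv r s g) = g := by
  funext m
  cases m with
  | zero => simp [genDiff, genDiffInv, hr]
  | succ m =>
    simp only [genDiff, genDiffInv_succ, Nat.add_one_ne_zero, if_false, Nat.add_sub_cancel]
    field_simp
    ring

theorem genDiff_injective (hr : r ≠ 0) : Function.Injective (genDiff r s) := by
  intro f f' h
  funext m
  induction m with
  | zero => simpa [genDiff, hr] using congrFun h 0
  | succ m ih =>
    have hm := congrFun h (m + 1)
    simp only [genDiff, Nat.add_one_ne_zero, if_false, Nat.add_sub_cancel, ih] at hm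
    exact mul_left_cancel₀ hr (add_right_cancel hm)

end GenDiff

section Btrans

variable {r s t u : ℝ}

theorem Btrans_apply_eq_genDiff (x : ℕ × ℕ → ℂ) (m n : ℕ) :
    Btrans r s t u x (m, n) =
      genDiff (t : ℂ) u (fun j => genDiff (r : ℂ) s (fun i => x (i, j)) m) n := by
  cases m <;> cases n <;> simp [Btrans, genDiff] <;> ring

theorem Binv_apply_eq_genDiffInv (y : ℕ × ℕ → ℂ) (m n : ℕ) :
    Binv r s t u y (m, n) =
      genDiffInv (r : ℂ) s (fun i => genDiffInv (t : ℂ) u (fun j => y (i, j)) n) m := by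
  simp only [Binv, genDiffInv, mul_sum]
  refine sum_congr rfl fun k _ => sum_congr rfl fun l _ => ?_
  ring

theorem Btrans_Binv (hr : r ≠ 0) (ht : t ≠ 0) (y : ℕ × ℕ → ℂ) :
    Btrans r s t u (Binv r s t u y) = y := by
  funext ⟨m, n⟩
  simp only [Btrans_apply_eq_genDiff, Binv_apply_eq_genDiffInv,
    genDiff_genDiffInv (Complex.ofReal_ne_zero.mpr hr),
    genDiff_genDiffInv (Complex.ofReal_ne_zero.mpr ht)]

theorem Btrans_injective (hr : r ≠ 0) (ht : t ≠ 0) : Function.Injective (Btrans r s t u) := by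
  intro x x' h
  have hcols (m : ℕ) : (fun j => genDiff (r : ℂ) s (fun i => x (i, j)) m) =
      fun j => genDiff (r : ℂ) s (fun i => x' (i, j)) m :=
    genDiff_injective (Complex.ofReal_ne_zero.mpr ht) <| funext fun n => by
      simpa only [Btrans_apply_eq_genDiff] using congrFun h (m, n)
  funext ⟨m, n⟩
  exact congrFun (genDiff_injective (Complex.ofReal_ne_zero.mpr hr)
    (funext fun i => congrFun (hcols i) n)) m

end Btrans

theorem stmt3_general (r s t u : ℝ) (hr : r ≠ 0) (ht : t ≠ 0) :
    (∀ y : ℕ × ℕ → ℂ, Btrans r s t u (Binv r s t u y) = y) ∧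
    (∀ y x : ℕ × ℕ → ℂ, Btrans r s t u x = y → x = Binv r s t u y) ∧
    Function.Bijective (Btrans r s t u) := by
  have hinj := Btrans_injective (s := s) (u := u) hr ht
  refine ⟨Btrans_Binv hr ht, fun y x hx => hinj (hx.trans (Btrans_Binv hr ht y).symm),
    hinj, fun y => ⟨Binv r s t u y, Btrans_Binv hr ht y⟩⟩

/-- For every double sequence `y`, the sequence
`x_{mn} = (1/(rt)) Σ_{k=0}^{m} Σ_{l=0}^{n} (−s/r)^{m−k} (−u/t)^{n−l} y_{kl}` satisfies
`B(r,s,t,u)x = y`, it is the unique such sequence, and `B(r,s,t,u)` is a bijection. -/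
theorem stmt3 (r s t u : ℝ) (hr : r ≠ 0) (hs : s ≠ 0) (ht : t ≠ 0) (hu : u ≠ 0) :
    (∀ y : ℕ × ℕ → ℂ, Btrans r s t u (Binv r s t u y) = y) ∧
    (∀ y x : ℕ × ℕ → ℂ, Btrans r s t u x = y → x = Binv r s t u y) ∧
    Function.Bijective (Btrans r s t u) :=
  stmt3_general r s t u hr ht
end

section
/- Let r, t be nonzero real numbers and set s = −r, u = −t. Then every bounded double sequence x belongs to B(C_{f0}); that is, if sup_{m,n} |x_{mn}| < ∞ then B(r,−r,t,−t)x is almost null (almost convergent to 0). -/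
open Finset

/-! With `x̃ := shiftPad x` (so `x̃ (a + 1, b + 1) = x (a, b)` and `x̃` vanishes on the axes),
`B(r, -r, t, -t) x` is `r t` times the mixed second difference of `x̃`. Hence every rectangular
block sum of it telescopes to four corner values of `x̃` and is at most `4 |r t| sup |x|`, and
dividing by the block area `(q + 1)(q' + 1)` makes the averages tend to `0` uniformly in the
position of the block. -/

theorem Finset.sum_range_sum_range_mixed_sub {G : Type*} [AddCommGroup G] (h : ℕ → ℕ → G)
    (m n p p' : ℕ) :
    ∑ k ∈ range p, ∑ l ∈ range p',
        (h (m + k + 1) (n + l + 1) - h (m + k) (n + l + 1) - h (m + k + 1) (n + l) +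
          h (m + k) (n + l)) =
      h (m + p) (n + p') - h m (n + p') - h (m + p) n + h m n := by
  have row (k : ℕ) : ∑ l ∈ range p',
      (h (m + k + 1) (n + l + 1) - h (m + k) (n + l + 1) - h (m + k + 1) (n + l) +
        h (m + k) (n + l)) =
      (h (m + k + 1) (n + p') - h (m + k + 1) n) - (h (m + k) (n + p') - h (m + k) n) := by
    have := sum_range_sub (fun l => h (m + k + 1) (n + l) - h (m + k) (n + l)) p'
    simp only [add_zero, ← add_assoc] at this
    rw [sub_sub_sub_comm, ← this]
    exact sum_congr rfl fun l _ => by abel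
  have := sum_range_sub (fun k => h (m + k) (n + p') - h (m + k) n) p
  simp only [add_zero, ← add_assoc] at this
  rw [sum_congr rfl fun k _ => row k, this]
  abel

theorem AlmostConvTo.zero_of_norm_blockSum_le (y : ℕ × ℕ → ℂ) (C : ℝ)
    (hC : ∀ q q' m n : ℕ,
      ‖∑ k ∈ range (q + 1), ∑ l ∈ range (q' + 1), y (m + k, n + l)‖ ≤ C) :
    AlmostConvTo y 0 := by
  intro ε hε
  obtain ⟨Q, hQ⟩ := exists_nat_gt (C / ε)
  refine ⟨Q, fun q q' hq _ m n => ?_⟩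
  have hq1 : C / ε < q + 1 := hQ.trans_le (by exact_mod_cast hq.trans (Nat.le_succ q))
  have hC0 : 0 ≤ C := (norm_nonneg _).trans (hC 0 0 0 0)
  have harea : (q + 1 : ℝ) ≤ (q + 1) * (q' + 1) := le_mul_of_one_le_right (by positivity)
    (by simp)
  rw [sub_zero, norm_mul, norm_div, norm_one, norm_mul]
  have hnorm (j : ℕ) : ‖(j : ℂ) + 1‖ = j + 1 := by exact_mod_cast Complex.norm_natCast (j + 1)
  rw [hnorm, hnorm, one_div_mul_eq_div]
  calc _ ≤ C / ((q + 1) * (q' + 1)) := by gcongr; exact hC q q' m n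
    _ ≤ C / (q + 1) := by gcongr
    _ < ε := by rwa [div_lt_iff₀ (by positivity), mul_comm, ← div_lt_iff₀ hε]

theorem norm_sub_sub_add_le_four_mul {E : Type*} [SeminormedAddCommGroup E] {a b c d : E}
    {M : ℝ} (ha : ‖a‖ ≤ M) (hb : ‖b‖ ≤ M) (hc : ‖c‖ ≤ M) (hd : ‖d‖ ≤ M) :
    ‖a - b - c + d‖ ≤ 4 * M := by
  linarith [norm_add_le (a - b - c) d, norm_sub_le (a - b) c, norm_sub_le a b]

def shiftPad {E : Type*} [Zero E] (x : ℕ × ℕ → E) (a b : ℕ) : E :=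
  if a = 0 ∨ b = 0 then 0 else x (a - 1, b - 1)

theorem norm_shiftPad_le {E : Type*} [SeminormedAddCommGroup E] {x : ℕ × ℕ → E} {M : ℝ}
    (hM : ∀ m n, ‖x (m, n)‖ ≤ M) (a b : ℕ) : ‖shiftPad x a b‖ ≤ M := by
  unfold shiftPad
  split_ifs
  · simpa using (norm_nonneg _).trans (hM 0 0)
  · exact hM _ _

theorem Btrans_neg_neg (r t : ℝ) (x : ℕ × ℕ → ℂ) (p : ℕ × ℕ) :
    Btrans r (-r) t (-t) x p =
      (r * t : ℂ) * (shiftPad x (p.1 + 1) (p.2 + 1) - shiftPad x p.1 (p.2 + 1) -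
        shiftPad x (p.1 + 1) p.2 + shiftPad x p.1 p.2) := by
  obtain ⟨a, b⟩ := p
  rcases a with _ | a <;> rcases b with _ | b <;> simp [Btrans, shiftPad] <;> ring

theorem stmt4_general (r t : ℝ) (x : ℕ × ℕ → ℂ)
    (hx : ∃ M : ℝ, ∀ m n : ℕ, ‖x (m, n)‖ ≤ M) :
    AlmostConvTo (Btrans r (-r) t (-t) x) 0 := by
  obtain ⟨M, hM⟩ := hx
  refine AlmostConvTo.zero_of_norm_blockSum_le _ (‖(r * t : ℂ)‖ * (4 * M)) fun q q' m n => ?_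
  simp only [Btrans_neg_neg, ← mul_sum, sum_range_sum_range_mixed_sub, norm_mul]
  have hb := norm_shiftPad_le hM
  gcongr
  exact norm_sub_sub_add_le_four_mul (hb _ _) (hb _ _) (hb _ _) (hb _ _)

/-- If `s = −r`, `u = −t`, then every bounded double sequence `x`
belongs to `B(C_{f0})`: `B(r,−r,t,−t)x` is almost null. -/
theorem stmt4 (r t : ℝ) (hr : r ≠ 0) (ht : t ≠ 0) (x : ℕ × ℕ → ℂ)
    (hx : ∃ M : ℝ, ∀ m n : ℕ, ‖x (m, n)‖ ≤ M) :
    AlmostConvTo (Btrans r (-r) t (-t) x) 0 :=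
  stmt4_general r t x hx
end

section
/- Let r, t be nonzero real numbers and set s = −r, u = −t. The double sequence x given by x_{kl} = k/(rt) for all k, l ∈ ℕ belongs to B[C_{f0}] (so that B(r,−r,t,−t)x is strongly almost null) but x is unbounded; in particular the inclusions M_u ⊆ B(C_{f0}) and [C_{f0}] ⊆ B[C_{f0}] are strict. -/
open Finset

/-!
With `s = -r`, `u = -t` the transform is `rt` times the mixed second difference
`x - S₁x - S₂x + S₁S₂x` (`S₁`, `S₂` the zero-padded shifts), so its sum over a block telescopes
to `rt` times four corner values of `x`. For bounded `x` these block sums stay bounded, so the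
block averages tend to `0`. For `x_{kl} = k/(rt)` the transform is the indicator of
`{(k, 0) : k ≥ 1}`, whose block averages are at most `1/(q'+1)`, while `x` is unbounded.
Strong almost nullity survives shifts, sums and scalar multiples, hence every `B(r,s,t,u)`, and
it forces boundedness, since one entry is at most a whole block sum; so `x` is not strongly
almost null.
-/

section Shifts

variable {α : Type*}

def shiftFst [Zero α] (x : ℕ × ℕ → α) : ℕ × ℕ → α := fun p =>
  if p.1 = 0 then 0 else x (p.1 - 1, p.2)

def shiftSnd [Zero α] (x : ℕ × ℕ → α) : ℕ × ℕ → α := fun p =>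
  if p.2 = 0 then 0 else x (p.1, p.2 - 1)

def blockSum [AddCommMonoid α] (x : ℕ × ℕ → α) (q q' m n : ℕ) : α :=
  ∑ k ∈ range (q + 1), ∑ l ∈ range (q' + 1), x (m + k, n + l)

@[simp] lemma shiftFst_zero_fst [Zero α] (x : ℕ × ℕ → α) (b : ℕ) : shiftFst x (0, b) = 0 := rfl

@[simp] lemma shiftFst_succ_fst [Zero α] (x : ℕ × ℕ → α) (a b : ℕ) :
    shiftFst x (a + 1, b) = x (a, b) := rfl

@[simp] lemma shiftSnd_zero_snd [Zero α] (x : ℕ × ℕ → α) (a : ℕ) : shiftSnd x (a, 0) = 0 := rfl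

@[simp] lemma shiftSnd_succ_snd [Zero α] (x : ℕ × ℕ → α) (a b : ℕ) :
    shiftSnd x (a, b + 1) = x (a, b) := rfl

end Shifts

lemma btrans_eq_shifts (r s t u : ℝ) (x : ℕ × ℕ → ℂ) :
    Btrans r s t u x = (s * u : ℂ) • shiftFst (shiftSnd x) + (s * t : ℂ) • shiftFst x +
      (r * u : ℂ) • shiftSnd x + (r * t : ℂ) • x := by
  funext ⟨a, b⟩
  rcases a with _ | a <;> rcases b with _ | b <;> simp [Btrans]

lemma sum_range_sub_of_succ {G : Type*} [AddCommGroup G] (f g : ℕ → G)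
    (hfg : ∀ j, g (j + 1) = f j) (m q : ℕ) :
    ∑ k ∈ range (q + 1), (f (m + k) - g (m + k)) = f (m + q) - g m := by
  have := Finset.sum_range_sub (fun k => g (m + k)) (q + 1)
  simp only [← add_assoc, hfg, add_zero] at this
  exact this

lemma sum_range_le_of_succ (g h : ℕ → ℝ) (hg : g 0 ≤ 0) (hgh : ∀ j, g (j + 1) = h j)
    (hh : ∀ j, 0 ≤ h j) (m q : ℕ) :
    ∑ k ∈ range (q + 1), g (m + k) ≤ ∑ k ∈ range (q + 1), h (m - 1 + k) := by
  rcases m with _ | m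
  · rw [sum_range_succ', sum_range_succ]
    simp only [zero_add, hgh, Nat.zero_sub]
    linarith [hh q]
  · simp only [Nat.add_sub_cancel, add_right_comm m 1, hgh, le_refl]

lemma norm_blockSum_le (x : ℕ × ℕ → ℂ) (q q' m n : ℕ) :
    ‖blockSum x q q' m n‖ ≤ blockSum (fun p => ‖x p‖) q q' m n :=
  (norm_sum_le _ _).trans (sum_le_sum fun _ _ => norm_sum_le _ _)

lemma stronglyAlmostConvTo_zero_iff (x : ℕ × ℕ → ℂ) :
    StronglyAlmostConvTo x 0 ↔ ∀ ε > (0 : ℝ), ∃ Q : ℕ, ∀ q q' : ℕ, Q ≤ q → Q ≤ q' →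
      ∀ m n : ℕ, blockSum (fun p => ‖x p‖) q q' m n < ((q : ℝ) + 1) * ((q' : ℝ) + 1) * ε := by
  have hpos : ∀ q q' : ℕ, (0 : ℝ) < ((q : ℝ) + 1) * ((q' : ℝ) + 1) := fun _ _ => by positivity
  simp only [StronglyAlmostConvTo, sub_zero, one_div, inv_mul_lt_iff₀ (hpos _ _)]
  rfl

lemma almostConvTo_zero_iff (x : ℕ × ℕ → ℂ) :
    AlmostConvTo x 0 ↔ ∀ ε > (0 : ℝ), ∃ Q : ℕ, ∀ q q' : ℕ, Q ≤ q → Q ≤ q' →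
      ∀ m n : ℕ, ‖blockSum x q q' m n‖ < ((q : ℝ) + 1) * ((q' : ℝ) + 1) * ε := by
  have hpos : ∀ q q' : ℕ, (0 : ℝ) < ((q : ℝ) + 1) * ((q' : ℝ) + 1) := fun _ _ => by positivity
  have hnorm : ∀ q : ℕ, ‖(q : ℂ) + 1‖ = (q : ℝ) + 1 := fun q => by
    exact_mod_cast Complex.norm_natCast (q + 1)
  simp only [AlmostConvTo, sub_zero, norm_mul, one_div, norm_inv, hnorm,
    inv_mul_lt_iff₀ (hpos _ _)]
  rfl

namespace StronglyAlmostConvTo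

variable {x y : ℕ × ℕ → ℂ}

lemma almostConvTo_zero (hx : StronglyAlmostConvTo x 0) : AlmostConvTo x 0 := by
  rw [stronglyAlmostConvTo_zero_iff] at hx
  rw [almostConvTo_zero_iff]
  intro ε hε
  obtain ⟨Q, hQ⟩ := hx ε hε
  exact ⟨Q, fun q q' hq hq' m n => (norm_blockSum_le x q q' m n).trans_lt (hQ q q' hq hq' m n)⟩

lemma of_blockSum_le (hx : StronglyAlmostConvTo x 0) {C : ℝ} (hC : 0 ≤ C)
    (h : ∀ q q' m n : ℕ, ∃ m' n' : ℕ,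
      blockSum (fun p => ‖y p‖) q q' m n ≤ C * blockSum (fun p => ‖x p‖) q q' m' n') :
    StronglyAlmostConvTo y 0 := by
  rw [stronglyAlmostConvTo_zero_iff] at hx ⊢
  intro ε hε
  obtain ⟨Q, hQ⟩ := hx (ε / (C + 1)) (by positivity)
  refine ⟨Q, fun q q' hq hq' m n => ?_⟩
  obtain ⟨m', n', hle⟩ := h q q' m n
  calc blockSum (fun p => ‖y p‖) q q' m n
      ≤ (C + 1) * blockSum (fun p => ‖x p‖) q q' m' n' := by
        have : 0 ≤ blockSum (fun p => ‖x p‖) q q' m' n' :=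
          sum_nonneg fun _ _ => sum_nonneg fun _ _ => norm_nonneg _
        nlinarith
    _ < (C + 1) * (((q : ℝ) + 1) * ((q' : ℝ) + 1) * (ε / (C + 1))) := by
        gcongr
        exact hQ q q' hq hq' m' n'
    _ = ((q : ℝ) + 1) * ((q' : ℝ) + 1) * ε := by field_simp

lemma add (hx : StronglyAlmostConvTo x 0) (hy : StronglyAlmostConvTo y 0) :
    StronglyAlmostConvTo (x + y) 0 := by
  rw [stronglyAlmostConvTo_zero_iff] at hx hy ⊢
  intro ε hε
  obtain ⟨Q₁, hQ₁⟩ := hx (ε / 2) (by positivity)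
  obtain ⟨Q₂, hQ₂⟩ := hy (ε / 2) (by positivity)
  refine ⟨max Q₁ Q₂, fun q q' hq hq' m n => ?_⟩
  have hle : blockSum (fun p => ‖(x + y) p‖) q q' m n ≤
      blockSum (fun p => ‖x p‖) q q' m n + blockSum (fun p => ‖y p‖) q q' m n := by
    simp only [blockSum, ← sum_add_distrib]
    exact sum_le_sum fun _ _ => sum_le_sum fun _ _ => norm_add_le _ _
  have h₁ := hQ₁ q q' (le_of_max_le_left hq) (le_of_max_le_left hq') m n
  have h₂ := hQ₂ q q' (le_of_max_le_right hq) (le_of_max_le_right hq') m n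
  linarith

lemma const_smul (hx : StronglyAlmostConvTo x 0) (c : ℂ) : StronglyAlmostConvTo (c • x) 0 :=
  hx.of_blockSum_le (norm_nonneg c) fun q q' m n =>
    ⟨m, n, by simp only [blockSum, Pi.smul_apply, norm_smul, mul_sum, le_refl]⟩

lemma shiftFst (hx : StronglyAlmostConvTo x 0) : StronglyAlmostConvTo (shiftFst x) 0 :=
  hx.of_blockSum_le zero_le_one fun q q' m n => ⟨m - 1, n, by
    rw [one_mul]
    exact sum_range_le_of_succ (fun a => ∑ l ∈ range (q' + 1), ‖_root_.shiftFst x (a, n + l)‖)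
      (fun a => ∑ l ∈ range (q' + 1), ‖x (a, n + l)‖)
      (by simp) (fun j => by simp) (fun _ => sum_nonneg fun _ _ => norm_nonneg _) m q⟩

lemma shiftSnd (hx : StronglyAlmostConvTo x 0) : StronglyAlmostConvTo (shiftSnd x) 0 :=
  hx.of_blockSum_le zero_le_one fun q q' m n => ⟨m, n - 1, by
    rw [one_mul]
    exact sum_le_sum fun k _ => sum_range_le_of_succ (fun b => ‖_root_.shiftSnd x (m + k, b)‖)
      (fun b => ‖x (m + k, b)‖)
      (by simp) (fun j => by simp) (fun _ => norm_nonneg _) n q'⟩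

lemma btrans (r s t u : ℝ) (hx : StronglyAlmostConvTo x 0) :
    StronglyAlmostConvTo (Btrans r s t u x) 0 := by
  rw [btrans_eq_shifts]
  exact ((((hx.shiftSnd.shiftFst.const_smul _).add (hx.shiftFst.const_smul _)).add
    (hx.shiftSnd.const_smul _)).add (hx.const_smul _))

lemma exists_norm_le (hx : StronglyAlmostConvTo x 0) : ∃ M : ℝ, ∀ m n : ℕ, ‖x (m, n)‖ ≤ M := by
  rw [stronglyAlmostConvTo_zero_iff] at hx
  obtain ⟨Q, hQ⟩ := hx 1 one_pos
  refine ⟨((Q : ℝ) + 1) * ((Q : ℝ) + 1) * 1, fun m n => (hQ Q Q le_rfl le_rfl m n).le.trans' ?_⟩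
  have hrow := single_le_sum (f := fun l => ‖x (m + 0, n + l)‖)
    (fun _ _ => norm_nonneg _) (mem_range.2 (Nat.succ_pos Q))
  have hcol := single_le_sum (f := fun k => ∑ l ∈ range (Q + 1), ‖x (m + k, n + l)‖)
    (fun _ _ => sum_nonneg fun _ _ => norm_nonneg _) (mem_range.2 (Nat.succ_pos Q))
  simpa [blockSum] using hrow.trans hcol

end StronglyAlmostConvTo

lemma almostConvTo_zero_of_norm_blockSum_le (x : ℕ × ℕ → ℂ) (C : ℝ)
    (h : ∀ q q' m n : ℕ, ‖blockSum x q q' m n‖ ≤ C) : AlmostConvTo x 0 := by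
  rw [almostConvTo_zero_iff]
  intro ε hε
  obtain ⟨Q, hQ⟩ := exists_nat_gt (C / ε)
  refine ⟨Q, fun q q' hq hq' m n => (h q q' m n).trans_lt ?_⟩
  have hq : (Q : ℝ) ≤ q := by exact_mod_cast hq
  have hq' : (1 : ℝ) ≤ (q' : ℝ) + 1 := by linarith [(q'.cast_nonneg : (0 : ℝ) ≤ q')]
  calc C < ((Q : ℝ) + 1) * ε := by rw [div_lt_iff₀ hε] at hQ; linarith
    _ ≤ ((q : ℝ) + 1) * ((q' : ℝ) + 1) * ε := by gcongr; nlinarith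

section DifferenceOperator

variable (r t : ℝ) (x : ℕ × ℕ → ℂ)

lemma btrans_neg_neg_apply (p : ℕ × ℕ) :
    Btrans r (-r) t (-t) x p =
      (r * t : ℂ) * (x p - shiftFst x p - shiftSnd x p + shiftFst (shiftSnd x) p) := by
  rw [btrans_eq_shifts]
  simp only [Pi.add_apply, Pi.smul_apply, smul_eq_mul, Complex.ofReal_neg]
  ring

lemma blockSum_btrans_neg_neg (q q' m n : ℕ) :
    blockSum (Btrans r (-r) t (-t) x) q q' m n = (r * t : ℂ) *
      (x (m + q, n + q') - shiftSnd x (m + q, n) - shiftFst x (m, n + q') +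
        shiftFst (shiftSnd x) (m, n)) := by
  simp only [blockSum, btrans_neg_neg_apply, ← mul_sum]
  congr 1
  calc ∑ k ∈ range (q + 1), ∑ l ∈ range (q' + 1),
        (x (m + k, n + l) - shiftFst x (m + k, n + l) - shiftSnd x (m + k, n + l) +
          shiftFst (shiftSnd x) (m + k, n + l))
      = ∑ k ∈ range (q + 1), ((x (m + k, n + q') - shiftSnd x (m + k, n)) -
          (shiftFst x (m + k, n + q') - shiftFst (shiftSnd x) (m + k, n))) := by
        refine sum_congr rfl fun k _ => (sum_congr rfl fun _ _ => ?_).trans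
          ((sum_range_sub_of_succ (fun b => x (m + k, b) - shiftFst x (m + k, b))
            (fun b => shiftSnd x (m + k, b) - shiftFst (shiftSnd x) (m + k, b))
            (fun j => by simp [shiftFst]) n q').trans ?_) <;> ring
    _ = _ := by
        rw [sum_range_sub_of_succ (fun a => x (a, n + q') - shiftSnd x (a, n))
          (fun a => shiftFst x (a, n + q') - shiftFst (shiftSnd x) (a, n))
          (fun j => by simp)]
        ring

lemma almostConvTo_btrans_neg_neg_of_bounded {M : ℝ} (hM : ∀ m n : ℕ, ‖x (m, n)‖ ≤ M) :
    AlmostConvTo (Btrans r (-r) t (-t) x) 0 := by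
  have hM0 : 0 ≤ M := (norm_nonneg _).trans (hM 0 0)
  have hFst : ∀ y : ℕ × ℕ → ℂ, (∀ p, ‖y p‖ ≤ M) → ∀ p, ‖shiftFst y p‖ ≤ M :=
    fun y hy p => by unfold shiftFst; split_ifs <;> simp [hy, hM0]
  have hSnd : ∀ y : ℕ × ℕ → ℂ, (∀ p, ‖y p‖ ≤ M) → ∀ p, ‖shiftSnd y p‖ ≤ M :=
    fun y hy p => by unfold shiftSnd; split_ifs <;> simp [hy, hM0]
  have hx : ∀ p, ‖x p‖ ≤ M := fun p => hM p.1 p.2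
  refine almostConvTo_zero_of_norm_blockSum_le _ (‖(r * t : ℂ)‖ * (4 * M)) fun q q' m n => ?_
  rw [blockSum_btrans_neg_neg, norm_mul]
  gcongr
  have hnorm₄ : ∀ a b c d : ℂ, ‖a - b - c + d‖ ≤ ‖a‖ + ‖b‖ + ‖c‖ + ‖d‖ := fun a b c d => by
    linarith [norm_add_le (a - b - c) d, norm_sub_le (a - b) c, norm_sub_le a b]
  linarith [hnorm₄ (x (m + q, n + q')) (shiftSnd x (m + q, n)) (shiftFst x (m, n + q'))
    (shiftFst (shiftSnd x) (m, n)), hx (m + q, n + q'), hSnd x hx (m + q, n),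
    hFst x hx (m, n + q'), hFst _ (hSnd x hx) (m, n)]

end DifferenceOperator

lemma stronglyAlmostConvTo_zero_of_eq_zero_of_snd_ne_zero (x : ℕ × ℕ → ℂ) {M : ℝ}
    (hM : ∀ p, ‖x p‖ ≤ M) (hx : ∀ m n : ℕ, n ≠ 0 → x (m, n) = 0) :
    StronglyAlmostConvTo x 0 := by
  rw [stronglyAlmostConvTo_zero_iff]
  intro ε hε
  obtain ⟨Q, hQ⟩ := exists_nat_gt (M / ε)
  refine ⟨Q, fun q q' hq hq' m n => ?_⟩
  have hcol : ∀ k, ∑ l ∈ range (q' + 1), ‖x (m + k, n + l)‖ ≤ M := fun k => by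
    rw [sum_eq_single 0 (fun l _ hl => by rw [hx _ _ (by omega), norm_zero])
      (fun h => absurd (mem_range.2 q'.succ_pos) h)]
    exact hM _
  have hq' : (Q : ℝ) ≤ q' := by exact_mod_cast hq'
  calc blockSum (fun p => ‖x p‖) q q' m n ≤ ((q : ℝ) + 1) * M := by
        simpa [blockSum] using sum_le_sum fun k (_ : k ∈ range (q + 1)) => hcol k
    _ < ((q : ℝ) + 1) * ((q' : ℝ) + 1) * ε := by
        rw [mul_assoc]
        gcongr
        rw [div_lt_iff₀ hε] at hQ
        nlinarith

section LinearExample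

variable {r t : ℝ}

lemma btrans_neg_neg_fst_div (hr : r ≠ 0) (ht : t ≠ 0) :
    Btrans r (-r) t (-t) (fun p => (p.1 : ℂ) / (r * t : ℂ)) =
      fun p => if p.2 = 0 ∧ p.1 ≠ 0 then 1 else 0 := by
  have hr' : (r : ℂ) ≠ 0 := Complex.ofReal_ne_zero.2 hr
  have ht' : (t : ℂ) ≠ 0 := Complex.ofReal_ne_zero.2 ht
  funext ⟨a, b⟩
  rw [btrans_neg_neg_apply]
  rcases a with _ | a <;> rcases b with _ | b <;> simp [shiftFst, shiftSnd]
  field_simp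
  ring

lemma not_bounded_fst_div (hr : r ≠ 0) (ht : t ≠ 0) :
    ¬ ∃ M : ℝ, ∀ m n : ℕ, ‖((m : ℂ) / (r * t : ℂ))‖ ≤ M := by
  rintro ⟨M, hM⟩
  have hrt : 0 < |r * t| := abs_pos.2 (mul_ne_zero hr ht)
  obtain ⟨m, hm⟩ := exists_nat_gt (M * |r * t|)
  have h := hM m 0
  rw [norm_div, Complex.norm_natCast, ← Complex.ofReal_mul, Complex.norm_real, Real.norm_eq_abs,
    div_le_iff₀ hrt] at h
  linarith

end LinearExample

/-- With `s = −r`, `u = −t`, the sequence `x_{kl} = k/(rt)` lies in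
`B[C_{f0}]` but is unbounded; hence the inclusions `M_u ⊆ B(C_{f0})` and
`[C_{f0}] ⊆ B[C_{f0}]` are strict. -/
theorem stmt5 (r t : ℝ) (hr : r ≠ 0) (ht : t ≠ 0) :
    -- x_{kl} = k/(rt) has strongly almost null B-transform
    StronglyAlmostConvTo
      (Btrans r (-r) t (-t) (fun p => (p.1 : ℂ) / (r * t : ℂ))) 0 ∧
    -- but x is unbounded
    (¬ ∃ M : ℝ, ∀ m n : ℕ, ‖((m : ℂ) / (r * t : ℂ))‖ ≤ M) ∧
    -- M_u ⊂ B(C_{f0}) strictly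
    {x : ℕ × ℕ → ℂ | ∃ M : ℝ, ∀ m n : ℕ, ‖x (m, n)‖ ≤ M} ⊂
      {x : ℕ × ℕ → ℂ | AlmostConvTo (Btrans r (-r) t (-t) x) 0} ∧
    -- [C_{f0}] ⊂ B[C_{f0}] strictly
    {x : ℕ × ℕ → ℂ | StronglyAlmostConvTo x 0} ⊂
      {x : ℕ × ℕ → ℂ | StronglyAlmostConvTo (Btrans r (-r) t (-t) x) 0} := by
  have hBx : StronglyAlmostConvTo
      (Btrans r (-r) t (-t) (fun p => (p.1 : ℂ) / (r * t : ℂ))) 0 := by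
    rw [btrans_neg_neg_fst_div hr ht]
    exact stronglyAlmostConvTo_zero_of_eq_zero_of_snd_ne_zero _ (M := 1)
      (fun p => by split_ifs <;> simp) (fun m n hn => by simp [hn])
  have hunbdd := not_bounded_fst_div hr ht
  refine ⟨hBx, hunbdd, ⟨?_, ?_⟩, ⟨?_, ?_⟩⟩
  · rintro x ⟨M, hM⟩
    exact almostConvTo_btrans_neg_neg_of_bounded r t x hM
  · exact fun h => hunbdd (h hBx.almostConvTo_zero)
  · exact fun x hx => hx.btrans r (-r) t (-t)
  · exact fun h => hunbdd (StronglyAlmostConvTo.exists_norm_le (h hBx))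
end

section
/- Let r, t be nonzero real numbers and set s = −r, u = −t. The double sequence x given by x_{kl} = 1 if k + l is even and x_{kl} = 0 otherwise is bounded but does not belong to B[C_{f0}]; that is, B(r,−r,t,−t)x is not strongly almost null. In particular M_u is not contained in B[C_{f0}]. -/
open Finset

/-!
For `s = -r`, `u = -t` the transform is `r t` times the mixed second difference
`x_{m-1,n-1} - x_{m-1,n} - x_{m,n-1} + x_{mn}`. On the checkerboard sequence this difference is
`±2` away from the axes and `±1` on them, so every Cesàro block mean of `|Bx|` is at least `|r t|`.
-/

lemma StronglyAlmostConvTo.not_of_le_norm_sub {x : ℕ × ℕ → ℂ} {L : ℂ} {c : ℝ} (hc : 0 < c)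
    (h : ∀ p, c ≤ ‖x p - L‖) : ¬ StronglyAlmostConvTo x L := by
  intro hx
  obtain ⟨Q, hQ⟩ := hx c hc
  refine (hQ Q Q le_rfl le_rfl 0 0).not_ge ?_
  have hsum : ((Q : ℝ) + 1) * ((Q : ℝ) + 1) * c ≤
      ∑ k ∈ range (Q + 1), ∑ l ∈ range (Q + 1), ‖x (0 + k, 0 + l) - L‖ :=
    calc ((Q : ℝ) + 1) * ((Q : ℝ) + 1) * c
        = ∑ k ∈ range (Q + 1), ∑ l ∈ range (Q + 1), c := by simp; ring
      _ ≤ _ := sum_le_sum fun k _ => sum_le_sum fun l _ => h _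
  rw [one_div_mul_eq_div, le_div_iff₀ (by positivity)]
  linarith

def checkerboard : ℕ × ℕ → ℂ := fun p => if (p.1 + p.2) % 2 = 0 then 1 else 0

lemma checkerboard_apply (m n : ℕ) :
    checkerboard (m, n) = if Even (m + n) then 1 else 0 := by
  simp [checkerboard, Nat.even_iff]

lemma norm_checkerboard_le_one (p : ℕ × ℕ) : ‖checkerboard p‖ ≤ 1 := by
  unfold checkerboard
  split_ifs <;> simp

lemma Btrans_checkerboard (r t : ℝ) (m n : ℕ) :
    Btrans r (-r) t (-t) checkerboard (m, n) =
      r * t * (-1) ^ (m + n) * if m = 0 ∨ n = 0 then 1 else 2 := by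
  rcases m with _ | m <;> rcases n with _ | n
  · simp [Btrans, checkerboard_apply]
  · rcases Nat.even_or_odd n with h | h <;>
      simp [Btrans, checkerboard_apply, Nat.even_add_one, h, h.neg_one_pow, pow_succ]
  · rcases Nat.even_or_odd m with h | h <;>
      simp [Btrans, checkerboard_apply, Nat.even_add_one, h, h.neg_one_pow, pow_succ]
  · rcases Nat.even_or_odd (m + n) with h | h <;>
      simp [Btrans, checkerboard_apply, Nat.even_add_one, ← add_assoc, add_right_comm _ 1, h,
        h.neg_one_pow, pow_succ, ← Nat.not_odd_iff_even] <;> ring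

lemma abs_mul_le_norm_Btrans_checkerboard (r t : ℝ) (p : ℕ × ℕ) :
    |r * t| ≤ ‖Btrans r (-r) t (-t) checkerboard p‖ := by
  have hrt : ‖(r * t : ℂ)‖ = |r * t| := by norm_cast
  rw [Btrans_checkerboard, norm_mul, norm_mul, norm_pow, norm_neg, norm_one, one_pow, mul_one, hrt]
  split_ifs
  · rw [norm_one, mul_one]
  · rw [Complex.norm_two]
    exact le_mul_of_one_le_right (abs_nonneg _) one_le_two

/-- With `s = −r`, `u = −t`, the sequence `x_{kl} = 1` for `k+l` even and
`0` otherwise is bounded but `B(r,−r,t,−t)x` is not strongly almost null; in particular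
`M_u` is not contained in `B[C_{f0}]`. -/
theorem stmt6 (r t : ℝ) (hr : r ≠ 0) (ht : t ≠ 0) :
    -- the sequence is bounded
    (∃ M : ℝ, ∀ m n : ℕ,
      ‖(if (m + n) % 2 = 0 then (1 : ℂ) else 0)‖ ≤ M) ∧
    -- its B-transform is not strongly almost null
    ¬ StronglyAlmostConvTo
        (Btrans r (-r) t (-t) (fun p => if (p.1 + p.2) % 2 = 0 then (1 : ℂ) else 0)) 0 ∧
    -- M_u is not contained in B[C_{f0}]
    ¬ ({x : ℕ × ℕ → ℂ | ∃ M : ℝ, ∀ m n : ℕ, ‖x (m, n)‖ ≤ M} ⊆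
        {x : ℕ × ℕ → ℂ | StronglyAlmostConvTo (Btrans r (-r) t (-t) x) 0}) := by
  have hbdd : ∀ m n : ℕ, ‖checkerboard (m, n)‖ ≤ 1 := fun m n => norm_checkerboard_le_one _
  have hB : ¬ StronglyAlmostConvTo (Btrans r (-r) t (-t) checkerboard) 0 :=
    StronglyAlmostConvTo.not_of_le_norm_sub (abs_pos.2 (mul_ne_zero hr ht)) fun p => by
      simpa only [sub_zero] using abs_mul_le_norm_Btrans_checkerboard r t p
  exact ⟨⟨1, hbdd⟩, hB, fun hsub => hB (hsub ⟨1, hbdd⟩)⟩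
end

section
/- The double sequence x defined by x_{kl} = (−1)^l for all k, l ∈ ℕ is almost convergent (with f2-lim x = 0) but is not strongly almost convergent to any limit; hence the inclusion [C_f] ⊆ C_f is strict. -/
/-!
Any window of consecutive terms of `(-1)^l` sums to `0` or `±1`, so the rectangular averages
of `x` have modulus at most `1 / (q' + 1)`. On the other hand two consecutive terms are `±a`
with `‖a‖ = 1`, and `‖a - L‖ + ‖-a - L‖ ≥ ‖2a‖ = 2`; hence over any square of even side the
averages of `‖x_{kl} - L‖` are at least `1`, whatever `L` is.
-/

open Finset

lemma norm_natCast_add_one (q : ℕ) : ‖(q : ℂ) + 1‖ = q + 1 := by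
  exact_mod_cast Complex.norm_natCast (q + 1)

lemma norm_one_div_succ_mul_succ (q q' : ℕ) :
    ‖(1 / (((q : ℂ) + 1) * ((q' : ℂ) + 1)))‖ = 1 / (((q : ℝ) + 1) * ((q' : ℝ) + 1)) := by
  rw [norm_div, norm_one, norm_mul, norm_natCast_add_one, norm_natCast_add_one]

lemma StronglyAlmostConvTo.almostConvTo {x : ℕ × ℕ → ℂ} {L : ℂ}
    (h : StronglyAlmostConvTo x L) : AlmostConvTo x L := by
  intro ε hε
  obtain ⟨Q, hQ⟩ := h ε hε
  refine ⟨Q, fun q q' hq hq' m n => lt_of_le_of_lt ?_ (hQ q q' hq hq' m n)⟩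
  have hcenter : (1 / (((q : ℂ) + 1) * ((q' : ℂ) + 1))) *
      (∑ k ∈ range (q + 1), ∑ l ∈ range (q' + 1), x (m + k, n + l)) - L =
      (1 / (((q : ℂ) + 1) * ((q' : ℂ) + 1))) *
      ∑ k ∈ range (q + 1), ∑ l ∈ range (q' + 1), (x (m + k, n + l) - L) := by
    simp only [sum_sub_distrib, sum_const, card_range, nsmul_eq_mul]
    push_cast
    field_simp
  rw [hcenter, norm_mul, norm_one_div_succ_mul_succ]
  gcongr
  exact (norm_sum_le _ _).trans (sum_le_sum fun k _ => norm_sum_le _ _)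

lemma norm_sum_range_neg_one_pow_le_one (n N : ℕ) :
    ‖∑ l ∈ range N, (-1 : ℂ) ^ (n + l)‖ ≤ 1 := by
  simp only [pow_add, ← mul_sum, norm_mul, norm_pow, norm_neg, norm_one, one_pow, one_mul,
    neg_one_geom_sum]
  split_ifs <;> simp

lemma almostConvTo_neg_one_pow_snd : AlmostConvTo (fun p => (-1 : ℂ) ^ p.2) 0 := by
  intro ε hε
  obtain ⟨Q, hQ⟩ := exists_nat_gt (1 / ε)
  refine ⟨Q, fun q q' _ hq' m n => ?_⟩
  set S := ∑ l ∈ range (q' + 1), (-1 : ℂ) ^ (n + l)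
  have hsum : ∑ k ∈ range (q + 1), ∑ l ∈ range (q' + 1), (-1 : ℂ) ^ (n + l) =
      ((q + 1 : ℕ) : ℂ) * S := by
    rw [sum_const, card_range, nsmul_eq_mul]
  have hq'ε : 1 / ε < (q' : ℝ) + 1 := by
    linarith [(Nat.cast_le (α := ℝ)).mpr hq']
  calc ‖1 / (((q : ℂ) + 1) * ((q' : ℂ) + 1)) *
        (∑ k ∈ range (q + 1), ∑ l ∈ range (q' + 1), (-1 : ℂ) ^ (n + l)) - 0‖
      = 1 / ((q' : ℝ) + 1) * ‖S‖ := by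
        rw [sub_zero, hsum, norm_mul, norm_mul, norm_one_div_succ_mul_succ, Complex.norm_natCast]
        push_cast
        field_simp
    _ ≤ 1 / ((q' : ℝ) + 1) := mul_le_of_le_one_right (by positivity)
        (norm_sum_range_neg_one_pow_le_one n _)
    _ < ε := by rwa [div_lt_iff₀ (by positivity), ← div_lt_iff₀' hε]

lemma two_mul_norm_le_norm_sub_add_norm_neg_sub (a L : ℂ) :
    2 * ‖a‖ ≤ ‖a - L‖ + ‖-a - L‖ := by
  calc 2 * ‖a‖ = ‖(a - L) - (-a - L)‖ := by
        rw [show (a - L) - (-a - L) = 2 * a by ring, norm_mul, Complex.norm_two]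
    _ ≤ ‖a - L‖ + ‖-a - L‖ := norm_sub_le _ _

lemma two_mul_le_sum_range_norm_neg_one_pow_sub (L : ℂ) (n N : ℕ) :
    (2 * N : ℝ) ≤ ∑ l ∈ range (2 * N), ‖(-1 : ℂ) ^ (n + l) - L‖ := by
  induction N with
  | zero => simp
  | succ N ih =>
    have hpair := two_mul_norm_le_norm_sub_add_norm_neg_sub ((-1 : ℂ) ^ (n + 2 * N)) L
    rw [norm_pow, norm_neg, norm_one, one_pow, mul_one] at hpair
    rw [mul_add_one, sum_range_succ, sum_range_succ, ← add_assoc n, pow_succ, mul_neg_one]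
    push_cast
    linarith

lemma not_stronglyAlmostConvTo_neg_one_pow_snd (L : ℂ) :
    ¬ StronglyAlmostConvTo (fun p => (-1 : ℂ) ^ p.2) L := by
  intro hL
  obtain ⟨Q, hQ⟩ := hL 1 one_pos
  have hsquare := hQ (2 * Q + 1) (2 * Q + 1) (by omega) (by omega) 0 0
  refine hsquare.not_ge ?_
  have hrow := two_mul_le_sum_range_norm_neg_one_pow_sub L 0 (Q + 1)
  rw [show 2 * (Q + 1) = 2 * Q + 1 + 1 by ring] at hrow
  simp only [sum_const, card_range, nsmul_eq_mul, zero_add] at hrow ⊢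
  rw [one_div, le_inv_mul_iff₀ (by positivity), mul_one]
  push_cast at hrow ⊢
  nlinarith

/-- The sequence `x_{kl} = (−1)^l` is almost convergent to `0` but not
strongly almost convergent to any limit; hence `[C_f] ⊂ C_f` strictly. -/
theorem stmt11 :
    AlmostConvTo (fun p => (-1 : ℂ) ^ p.2) 0 ∧
    (¬ ∃ L : ℂ, StronglyAlmostConvTo (fun p => (-1 : ℂ) ^ p.2) L) ∧
    {x : ℕ × ℕ → ℂ | ∃ L, StronglyAlmostConvTo x L} ⊂
      {x : ℕ × ℕ → ℂ | ∃ L, AlmostConvTo x L} := by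
  have hnot : ¬ ∃ L : ℂ, StronglyAlmostConvTo (fun p => (-1 : ℂ) ^ p.2) L :=
    not_exists.2 not_stronglyAlmostConvTo_neg_one_pow_snd
  refine ⟨almostConvTo_neg_one_pow_snd, hnot, fun x ⟨L, hL⟩ => ⟨L, hL.almostConvTo⟩, ?_⟩
  exact fun hsub => hnot (hsub ⟨0, almostConvTo_neg_one_pow_snd⟩)
end

section
/- Every bounded double sequence that converges in Pringsheim's sense to L is strongly almost convergent to L; that is, C_bp ⊆ [C_f] and the Pringsheim limit equals the [f2]-limit. -/
open Finset

/-! A window of side lengths `p, p'` meets the strip where Pringsheim convergence gives no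
control (one index below `N`) in at most `N (p + p')` points. On those the terms are bounded by
`C`, elsewhere they are below `ε / 2`; so the window average is at most
`ε / 2 + N C (1 / p + 1 / p')`, which is below `ε` once both sides are large. -/

theorem sum_range_le_of_le_of_forall_ge {b : ℕ → ℝ} {C δ : ℝ} {N : ℕ} (hC₀ : 0 ≤ C)
    (hδ₀ : 0 ≤ δ) (hC : ∀ l, b l ≤ C) (hδ : ∀ l, N ≤ l → b l ≤ δ) (p : ℕ) :
    ∑ l ∈ range p, b l ≤ p * δ + N * C := by
  have hhead : #((range p).filter (· < N)) ≤ N :=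
    (card_le_card fun l hl => by simp_all).trans (card_range N).le
  have htail : #((range p).filter (¬ · < N)) ≤ p := (card_filter_le _ _).trans (card_range p).le
  rw [← sum_filter_add_sum_filter_not _ (· < N)]
  calc ∑ l ∈ (range p).filter (· < N), b l + ∑ l ∈ (range p).filter (¬ · < N), b l
      ≤ #((range p).filter (· < N)) • C + #((range p).filter (¬ · < N)) • δ :=
        add_le_add (sum_le_card_nsmul _ _ _ fun l _ => hC l)
          (sum_le_card_nsmul _ _ _ fun l hl => hδ l (by simp_all))
    _ ≤ N * C + p * δ := by
        simp only [nsmul_eq_mul]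
        gcongr
    _ = p * δ + N * C := add_comm _ _

theorem sum_range_sum_range_le_of_le_of_forall_ge {a : ℕ → ℕ → ℝ} {C δ : ℝ} {N : ℕ}
    (hC₀ : 0 ≤ C) (hδ₀ : 0 ≤ δ) (hC : ∀ k l, a k l ≤ C)
    (hδ : ∀ k l, N ≤ k → N ≤ l → a k l ≤ δ) (p p' : ℕ) :
    ∑ k ∈ range p, ∑ l ∈ range p', a k l ≤ p * p' * δ + N * C * (p + p') := by
  have hrow : ∀ k, ∑ l ∈ range p', a k l ≤ p' * C := fun k => by
    simpa using sum_le_card_nsmul (range p') (a k) C fun l _ => hC k l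
  have hrow_ge : ∀ k, N ≤ k → ∑ l ∈ range p', a k l ≤ p' * δ + N * C := fun k hk =>
    sum_range_le_of_le_of_forall_ge hC₀ hδ₀ (hC k) (hδ k · hk) p'
  calc ∑ k ∈ range p, ∑ l ∈ range p', a k l ≤ p * (p' * δ + N * C) + N * (p' * C) :=
        sum_range_le_of_le_of_forall_ge (by positivity) (by positivity) hrow hrow_ge p
    _ = p * p' * δ + N * C * (p + p') := by ring

/-- Every bounded, Pringsheim convergent double sequence is strongly
almost convergent to the same limit: `C_bp ⊆ [C_f]`. -/
theorem stmt13 (x : ℕ × ℕ → ℂ) (L : ℂ)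
    (hbdd : ∃ M : ℝ, ∀ m n : ℕ, ‖x (m, n)‖ ≤ M)
    (hconv : ∀ ε > (0 : ℝ), ∃ N : ℕ, ∀ m n : ℕ, N ≤ m → N ≤ n →
      ‖x (m, n) - L‖ < ε) :
    StronglyAlmostConvTo x L := by
  intro ε hε
  obtain ⟨M, hM⟩ := hbdd
  set C := M + ‖L‖
  have hC₀ : 0 ≤ C := by linarith [hM 0 0, norm_nonneg (x (0, 0)), norm_nonneg L]
  have hC : ∀ m n, ‖x (m, n) - L‖ ≤ C := fun m n => by
    linarith [norm_sub_le (x (m, n)) L, hM m n]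
  obtain ⟨N, hN⟩ := hconv (ε / 2) (half_pos hε)
  obtain ⟨Q, hQ⟩ := exists_nat_gt (4 * N * C / ε)
  refine ⟨Q, fun q q' hq hq' m n => ?_⟩
  have hwindow := sum_range_sum_range_le_of_le_of_forall_ge
    (a := fun k l => ‖x (m + k, n + l) - L‖) (N := N) hC₀ (half_pos hε).le
    (fun k l => hC _ _)
    (fun k l hk hl => (hN (m + k) (n + l) (by omega) (by omega)).le) (q + 1) (q' + 1)
  have hNC_lt : ∀ r : ℕ, Q ≤ r → 4 * N * C < (r + 1) * ε := fun r hr => by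
    have : (Q : ℝ) ≤ r := by exact_mod_cast hr
    rw [div_lt_iff₀ hε] at hQ
    nlinarith
  have hq₁ := mul_lt_mul_of_pos_left (hNC_lt q' hq') (by positivity : (0 : ℝ) < q + 1)
  have hq'₁ := mul_lt_mul_of_pos_left (hNC_lt q hq) (by positivity : (0 : ℝ) < q' + 1)
  rw [one_div, inv_mul_lt_iff₀ (by positivity)]
  push_cast at hwindow
  linarith
end
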